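/- arXiv:math/0506515 — 2 statements merged into one kernel-verified Lean document; each statement's English description precedes it below -/
import Mathlib

section
/- Let G be a finite abelian p-group of rank t ≥ 1, H a subgroup of G of order p, and π : G → G/H the natural projection. Then there exist elements g₁, …, g_t of G such that the internal product of the cyclic subgroups ⟨g₁⟩, …, ⟨g_t⟩ is direct and equal to G, and the internal product of ⟨π(g₁)⟩, …, ⟨π(g_t)⟩ is direct and equal to G/H. -/
/-!
Write `G ≅ ∏ᵢ ℤ/p^{eᵢ}` and let `h` generate `H`. Choose a coordinate `j` with `hⱼ ≠ 0` and `eⱼ`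
minimal. Every nonzero `hᵢ` has order `p` in a cyclic group of order `p^{eᵢ} ≥ p^{eⱼ}`, so
`h = p^{eⱼ-1} • x` with `p^{eⱼ} • x = 0`, and then `xⱼ` is a unit. Hence the transvection sending
the `j`-th standard generator to `x` is an automorphism, and the images of the standard generators
form a cyclic basis with `H ≤ ⟨x⟩`. Dividing by `H` only shrinks the `j`-th cyclic factor, so the
images in `G/H` still form a cyclic basis. The number of factors is the rank, as `G` maps onto
`(ℤ/p)^ι`.
-/

open Subgroup

@[to_additive]
def IsCyclicBasis {G ι : Type*} [Group G] (g : ι → G) : Prop :=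
  iSupIndep (fun i => zpowers (g i)) ∧ ⨆ i, zpowers (g i) = ⊤

section Basis

variable {G G' ι κ : Type*} [Group G] [Group G']

@[to_additive]
theorem IsCyclicBasis.map_mulEquiv {g : ι → G} (hg : IsCyclicBasis g) (e : G ≃* G') :
    IsCyclicBasis fun i => e (g i) := by
  have hmap : ∀ i, e.mapSubgroup (zpowers (g i)) = zpowers (e (g i)) := fun i =>
    MonoidHom.map_zpowers e.toMonoidHom (g i)
  refine ⟨?_, ?_⟩
  · simpa only [Function.comp_def, hmap] using (iSupIndep_map_orderIso_iff e.mapSubgroup).2 hg.1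
  · simp only [← hmap, ← e.mapSubgroup.map_iSup, hg.2, OrderIso.map_top]

theorem IsCyclicBasis.comp_equiv {g : ι → G} (hg : IsCyclicBasis g) (σ : κ ≃ ι) :
    IsCyclicBasis (g ∘ σ) :=
  ⟨hg.1.comp σ.injective, (σ.iSup_comp (g := fun i => zpowers (g i))).trans hg.2⟩

theorem isCyclicBasis_ofAdd_iff {A : Type*} [AddGroup A] (b : ι → A) :
    IsCyclicBasis (fun i => Multiplicative.ofAdd (b i)) ↔ IsAddCyclicBasis b := by
  have hmap : ∀ i, AddSubgroup.toSubgroup (AddSubgroup.zmultiples (b i)) =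
      zpowers (Multiplicative.ofAdd (b i)) := fun i => by
    ext x
    exact ⟨fun ⟨k, hk⟩ => ⟨k, congrArg Multiplicative.ofAdd hk⟩,
      fun ⟨k, hk⟩ => ⟨k, congrArg Multiplicative.toAdd hk⟩⟩
  simp only [IsCyclicBasis, IsAddCyclicBasis, ← hmap, ← AddSubgroup.toSubgroup.map_iSup]
  rw [← Function.comp_def, iSupIndep_map_orderIso_iff, map_eq_top_iff]

theorem Group.rank_le_card_of_iSup_zpowers_eq_top [Group.FG G] [Fintype ι] {g : ι → G}
    (hg : ⨆ i, zpowers (g i) = ⊤) : Group.rank G ≤ Fintype.card ι := by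
  classical
  have hcl : closure ((Finset.univ.image g : Finset G) : Set G) = ⊤ := by
    rw [Finset.coe_image, Finset.coe_univ, Set.image_univ, ← top_le_iff, ← hg]
    exact iSup_le fun i => zpowers_le.2 (subset_closure (Set.mem_range_self i))
  exact (Group.rank_le hcl).trans Finset.card_image_le

end Basis

@[to_additive]
theorem isCyclicBasis_mulSingle {ι : Type*} [Fintype ι] [DecidableEq ι] {G : ι → Type*}
    [∀ i, CommGroup (G i)] (c : ∀ i, G i) (hc : ∀ i, zpowers (c i) = ⊤) :
    IsCyclicBasis fun i => Pi.mulSingle i (c i) := by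
  have hmem : ∀ i (x : G i), Pi.mulSingle i x ∈ zpowers (Pi.mulSingle i (c i)) := fun i x => by
    obtain ⟨n, rfl⟩ := mem_zpowers_iff.1 (hc i ▸ mem_top x)
    exact ⟨n, (Pi.mulSingle_zpow i (c i) n).symm⟩
  refine ⟨iSupIndep_def.2 fun i => disjoint_def.2 fun {y} hy hy' => ?_, ?_⟩
  · have hker : ⨆ (k) (_ : k ≠ i), zpowers (Pi.mulSingle k (c k)) ≤
        (Pi.evalMonoidHom G i).ker :=
      iSup₂_le fun k hk => zpowers_le.2 (Pi.mulSingle_eq_of_ne' hk _)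
    obtain ⟨n, rfl⟩ := mem_zpowers_iff.1 hy
    have : c i ^ n = 1 := by simpa using hker hy'
    rw [← Pi.mulSingle_zpow, this, Pi.mulSingle_one]
  · refine eq_top_iff.2 fun x _ => ?_
    rw [← Finset.univ_prod_mulSingle x]
    exact Subgroup.prod_mem _ fun i _ => mem_iSup_of_mem i (hmem i (x i))

section Quotient

variable {G ι : Type*} [Group G] {H : Subgroup G} [H.Normal]

theorem Subgroup.disjoint_map_mk'_of_le_left {A B : Subgroup G} (hAB : Disjoint A B) (hH : H ≤ A) :
    Disjoint (A.map (QuotientGroup.mk' H)) (B.map (QuotientGroup.mk' H)) := by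
  refine disjoint_def.2 fun {y} hyA hyB => ?_
  obtain ⟨a, ha, rfl⟩ := mem_map.1 hyA
  obtain ⟨b, hb, hba⟩ := mem_map.1 hyB
  have hab : b⁻¹ * a ∈ H := QuotientGroup.eq.1 hba
  have hbA : b ∈ A := by simpa using A.mul_mem ha (A.inv_mem (hH hab))
  rw [← hba, disjoint_def.1 hAB hbA hb, map_one]

theorem iSupIndep.map_mk' {K : ι → Subgroup G} (hK : iSupIndep K) {j : ι} (hH : H ≤ K j) :
    iSupIndep fun i => (K i).map (QuotientGroup.mk' H) := by
  refine iSupIndep_def.2 fun i => ?_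
  simp only [← Subgroup.map_iSup]
  by_cases hij : i = j
  · subst hij
    exact disjoint_map_mk'_of_le_left (iSupIndep_def.1 hK i) hH
  · exact (disjoint_map_mk'_of_le_left (iSupIndep_def.1 hK i).symm
      (hH.trans (le_iSup₂_of_le j (Ne.symm hij) le_rfl))).symm

theorem IsCyclicBasis.map_mk' {g : ι → G} (hg : IsCyclicBasis g) {j : ι} (hH : H ≤ zpowers (g j)) :
    IsCyclicBasis fun i => QuotientGroup.mk' H (g i) := by
  have hmap : ∀ i, (zpowers (g i)).map (QuotientGroup.mk' H) =
      zpowers (QuotientGroup.mk' H (g i)) := fun i => MonoidHom.map_zpowers _ _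
  refine ⟨?_, ?_⟩
  · simpa only [hmap] using hg.1.map_mk' hH
  · rw [← iSup_congr hmap, ← Subgroup.map_iSup, hg.2, ← MonoidHom.range_eq_map,
      QuotientGroup.range_mk']

end Quotient

namespace ZMod

variable {p : ℕ}

theorem exists_pow_nsmul_eq_of_nsmul_eq_zero (hp : p ≠ 0) {e k : ℕ} (hk : k < e)
    {y : ZMod (p ^ e)} (hy : p • y = 0) :
    ∃ z : ZMod (p ^ e), p ^ k • z = y ∧ p ^ (k + 1) • z = 0 := by
  have : NeZero (p ^ e) := ⟨pow_ne_zero e hp⟩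
  have hdvd : p ^ (e - 1) ∣ y.val := by
    have : p ^ (e - 1) * p ∣ y.val * p := by
      rw [← pow_succ, Nat.sub_add_cancel (by omega), ← ZMod.natCast_eq_zero_iff]
      simpa [mul_comm, nsmul_eq_mul] using hy
    exact Nat.dvd_of_mul_dvd_mul_right (Nat.pos_of_ne_zero hp) this
  obtain ⟨c, hc⟩ := hdvd
  refine ⟨((p ^ (e - 1 - k) * c : ℕ) : ZMod (p ^ e)), ?_, ?_⟩
  · rw [← ZMod.natCast_zmod_val y, hc, nsmul_eq_mul, ← Nat.cast_mul, ← mul_assoc, ← pow_add,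
      Nat.add_sub_cancel' (by omega)]
  · rw [nsmul_eq_mul, ← Nat.cast_mul, ← mul_assoc, ← pow_add, ZMod.natCast_eq_zero_iff]
    exact Dvd.dvd.mul_right (pow_dvd_pow p (by omega)) c

theorem isUnit_of_pow_nsmul_ne_zero (hp : p.Prime) {e : ℕ} {y : ZMod (p ^ e)}
    (hy : p ^ (e - 1) • y ≠ 0) : IsUnit y := by
  have : NeZero (p ^ e) := ⟨pow_ne_zero e hp.ne_zero⟩
  rw [← ZMod.natCast_zmod_val y, ZMod.isUnit_iff_coprime]
  refine Nat.Coprime.pow_right e ((Nat.Prime.coprime_iff_not_dvd hp).2 fun ⟨c, hc⟩ => hy ?_).symm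
  rcases Nat.eq_zero_or_pos e with rfl | he
  · exact @Subsingleton.elim _ (ZMod.subsingleton_iff.2 (pow_zero p)) _ _
  · rw [← ZMod.natCast_zmod_val y, hc, nsmul_eq_mul, ← Nat.cast_mul, ZMod.natCast_eq_zero_iff,
      ← mul_assoc, ← pow_succ, Nat.sub_add_cancel he]
    exact dvd_mul_right _ _

end ZMod

section PiZMod

variable {ι : Type*} [Fintype ι] [DecidableEq ι]

theorem exists_addEquiv_pi_zmod_single_eq {n : ι → ℕ} [∀ i, NeZero (n i)] {j : ι}
    {x : ∀ i, ZMod (n i)} (hx : n j • x = 0) (hxj : IsUnit (x j)) :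
    ∃ ψ : (∀ i, ZMod (n i)) ≃+ (∀ i, ZMod (n i)), ψ (Pi.single j 1) = x := by
  set v := x - Pi.single j 1
  have hv : zmultiplesHom _ v (n j : ℤ) = 0 := by
    rw [zmultiplesHom_apply, natCast_zsmul, smul_sub, hx, ← Pi.single_smul, nsmul_eq_mul, mul_one,
      ZMod.natCast_self, Pi.single_zero, sub_zero]
  let τ : ZMod (n j) →+ ∀ i, ZMod (n i) := ZMod.lift (n j) ⟨zmultiplesHom _ v, hv⟩
  have hτ : ∀ c, τ c = c.val • v := fun c => by
    conv_lhs => rw [← ZMod.natCast_zmod_val c, ← Int.cast_natCast]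
    exact (ZMod.lift_coe _ _ _).trans (natCast_zsmul v c.val)
  let ψ : (∀ i, ZMod (n i)) →+ ∀ i, ZMod (n i) := .id _ + τ.comp (Pi.evalAddMonoidHom _ j)
  have hψ : ∀ f, ψ f = f + (f j).val • v := fun f => congrArg (f + ·) (hτ (f j))
  have hinj : Function.Injective ψ := by
    refine (injective_iff_map_eq_zero ψ).2 fun f hf => ?_
    have hfj : f j * x j = 0 := calc
      f j * x j = (f + (f j).val • v) j := by
        rw [Pi.add_apply, Pi.smul_apply, nsmul_eq_mul, ZMod.natCast_zmod_val]
        simp only [v, Pi.sub_apply, Pi.single_eq_same]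
        ring
      _ = 0 := by rw [← hψ, hf, Pi.zero_apply]
    rw [hψ, hxj.mul_left_eq_zero.1 hfj, ZMod.val_zero, zero_smul, add_zero] at hf
    exact hf
  refine ⟨AddEquiv.ofBijective ψ ⟨hinj, Finite.injective_iff_surjective.1 hinj⟩, ?_⟩
  change Pi.single j 1 + τ ((Pi.single j 1 : ∀ i, ZMod (n i)) j) = x
  rw [Pi.single_eq_same, ← Int.cast_one, ZMod.lift_coe]
  simp [v]

theorem exists_isAddCyclicBasis_pi_zmod_pow_mem_zmultiples {p : ℕ} (hp : p.Prime) {e : ι → ℕ}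
    {h : ∀ i, ZMod (p ^ e i)} (hh : p • h = 0) (hne : h ≠ 0) :
    ∃ (b : ι → ∀ i, ZMod (p ^ e i)) (j : ι),
      IsAddCyclicBasis b ∧ h ∈ AddSubgroup.zmultiples (b j) := by
  have : ∀ i, NeZero (p ^ e i) := fun i => ⟨pow_ne_zero _ hp.ne_zero⟩
  obtain ⟨j, hj, hjmin⟩ := Finset.exists_min_image {i | h i ≠ 0} e
    (Finset.filter_nonempty_iff.2 (by simpa [funext_iff] using hne))
  replace hj : h j ≠ 0 := by simpa using hj
  have hej : e j ≠ 0 := fun h0 =>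
    hj (@Subsingleton.elim _ (ZMod.subsingleton_iff.2 (by simp [h0])) _ _)
  have hdiv : ∀ i, ∃ z : ZMod (p ^ e i), p ^ (e j - 1) • z = h i ∧ p ^ e j • z = 0 := fun i => by
    by_cases hi : h i = 0
    · exact ⟨0, by simp [hi]⟩
    · have hji : e j ≤ e i := hjmin i (by simpa using hi)
      simpa [Nat.sub_add_cancel (Nat.pos_of_ne_zero hej)] using
        ZMod.exists_pow_nsmul_eq_of_nsmul_eq_zero hp.ne_zero (k := e j - 1) (by omega)
          (congrFun hh i)
  choose x hxh hx0 using hdiv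
  have hxj : IsUnit (x j) := ZMod.isUnit_of_pow_nsmul_ne_zero hp ((hxh j).symm ▸ hj)
  obtain ⟨ψ, hψ⟩ := exists_addEquiv_pi_zmod_single_eq (x := x) (funext hx0) hxj
  have hone : ∀ i, AddSubgroup.zmultiples (1 : ZMod (p ^ e i)) = ⊤ := fun i =>
    eq_top_iff.2 fun y _ => ⟨y.val, by simp⟩
  refine ⟨fun i => ψ (Pi.single i 1), j, (isAddCyclicBasis_single _ hone).map_addEquiv ψ, ?_⟩
  change h ∈ AddSubgroup.zmultiples (ψ (Pi.single j 1))
  rw [hψ]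
  exact (funext hxh : p ^ (e j - 1) • x = h) ▸ nsmul_mem (AddSubgroup.mem_zmultiples x) _

end PiZMod

theorem Module.finrank_le_rank_multiplicative (K : Type*) {V : Type*} [Ring K]
    [StrongRankCondition K] [AddCommGroup V] [Module K V] [Group.FG (Multiplicative V)] :
    Module.finrank K V ≤ Group.rank (Multiplicative V) := by
  classical
  obtain ⟨S, hS, hcl⟩ := Group.rank_spec (Multiplicative V)
  set T : Finset V := S.image Multiplicative.toAdd
  have hspan : Submodule.span K (T : Set V) = ⊤ := by
    refine eq_top_iff.2 fun v _ => ?_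
    have : closure (S : Set (Multiplicative V)) ≤
        (Submodule.span K (T : Set V)).toAddSubgroup.toSubgroup :=
      (closure_le _).2 fun s hs => show Multiplicative.toAdd s ∈ Submodule.span K (T : Set V) from
        Submodule.subset_span (Finset.mem_image_of_mem _ hs)
    exact this (hcl ▸ mem_top (Multiplicative.ofAdd v))
  calc Module.finrank K V = Module.finrank K (⊤ : Submodule K V) := (finrank_top K V).symm
    _ ≤ T.card := hspan ▸ finrank_span_finset_le_card T
    _ ≤ Group.rank (Multiplicative V) := hS ▸ Finset.card_image_le

theorem card_le_rank_multiplicative_pi_zmod {ι : Type*} [Fintype ι] {p : ℕ} (hp : p.Prime)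
    {n : ι → ℕ} [∀ i, NeZero (n i)] (hn : ∀ i, p ∣ n i) :
    Fintype.card ι ≤ Group.rank (Multiplicative (∀ i, ZMod (n i))) := by
  have : Fact p.Prime := ⟨hp⟩
  let f : (∀ i, ZMod (n i)) →+ (ι → ZMod p) :=
    AddMonoidHom.pi fun i =>
      (ZMod.castHom (hn i) (ZMod p)).toAddMonoidHom.comp (Pi.evalAddMonoidHom _ i)
  have hf : Function.Surjective f :=
    Function.Surjective.piMap fun i => ZMod.castHom_surjective (hn i)
  calc Fintype.card ι = Module.finrank (ZMod p) (ι → ZMod p) := (Module.finrank_pi _).symm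
    _ ≤ Group.rank (Multiplicative (ι → ZMod p)) := Module.finrank_le_rank_multiplicative _
    _ ≤ Group.rank (Multiplicative (∀ i, ZMod (n i))) :=
      Group.rank_le_of_surjective (AddMonoidHom.toMultiplicative f) hf

theorem IsPGroup.exists_mulEquiv_pi_zmod_pow {p : ℕ} [Fact p.Prime] {G : Type*} [CommGroup G]
    [Finite G] (hG : IsPGroup p G) :
    ∃ (ι : Type) (_ : Fintype ι) (e : ι → ℕ),
      (∀ i, e i ≠ 0) ∧ Nonempty (G ≃* Multiplicative (∀ i, ZMod (p ^ e i))) := by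
  classical
  obtain ⟨ι, _, n, hn, ⟨φ⟩⟩ := CommGroup.equiv_prod_multiplicative_zmod_of_finite G
  have hpow : ∀ i, ∃ k, n i = p ^ k := fun i => by
    have : NeZero (n i) := ⟨by have := hn i; omega⟩
    have hi : IsPGroup p (Multiplicative (ZMod (n i))) :=
      hG.of_injective
        (φ.symm.toMonoidHom.comp (MonoidHom.mulSingle (fun i => Multiplicative (ZMod (n i))) i))
        fun a b hab => Pi.mulSingle_injective i (φ.symm.injective hab)
    obtain ⟨k, hk⟩ := IsPGroup.iff_card.1 hi
    exact ⟨k, by simpa using hk⟩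
  choose e he using hpow
  refine ⟨ι, inferInstance, e, fun i h0 => by simpa [he, h0] using hn i, ⟨?_⟩⟩
  obtain rfl : n = fun i => p ^ e i := funext he
  exact φ.trans (MulEquiv.piMultiplicative _).symm

theorem IsPGroup.exists_isCyclicBasis_mem_zpowers {p : ℕ} [hp : Fact p.Prime] {G : Type*}
    [CommGroup G] [Finite G] (hG : IsPGroup p G) {y : G} (hy : y ^ p = 1) (hy1 : y ≠ 1) :
    ∃ (ι : Type) (_ : Fintype ι) (g : ι → G) (j : ι),
      IsCyclicBasis g ∧ Fintype.card ι = Group.rank G ∧ y ∈ zpowers (g j) := by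
  classical
  obtain ⟨ι, _, e, he, ⟨φ⟩⟩ := hG.exists_mulEquiv_pi_zmod_pow
  have : ∀ i, NeZero (p ^ e i) := fun i => ⟨pow_ne_zero _ hp.out.ne_zero⟩
  set h := Multiplicative.toAdd (φ y)
  have hh : p • h = 0 := by rw [← toAdd_pow, ← map_pow, hy, map_one, toAdd_one]
  have hne : h ≠ 0 := by simpa [h] using hy1
  obtain ⟨b, j, hb, m, hm⟩ := exists_isAddCyclicBasis_pi_zmod_pow_mem_zmultiples hp.out hh hne
  have hg := ((isCyclicBasis_ofAdd_iff b).2 hb).map_mulEquiv φ.symm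
  refine ⟨ι, inferInstance, _, j, hg,
    le_antisymm ?_ (Group.rank_le_card_of_iSup_zpowers_eq_top hg.2), m, ?_⟩
  · rw [Group.rank_congr φ]
    exact card_le_rank_multiplicative_pi_zmod hp.out fun i => dvd_pow_self p (he i)
  · simp only [← map_zpow, ← ofAdd_zsmul, hm, h, ofAdd_toAdd, MulEquiv.symm_apply_apply]

theorem abelian_pGroup_basis_adapted_to_quotient_general
    (p : ℕ) (hp : p.Prime) (G : Type*) [CommGroup G] [Finite G]
    (hG : IsPGroup p G) (t : ℕ) (hrank : Group.rank G = t)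
    (H : Subgroup G) (hH : Nat.card H = p) :
    ∃ g : Fin t → G,
      iSupIndep (fun i => Subgroup.zpowers (g i)) ∧
      (⨆ i, Subgroup.zpowers (g i)) = ⊤ ∧
      iSupIndep (fun i => Subgroup.zpowers (QuotientGroup.mk' H (g i))) ∧
      (⨆ i, Subgroup.zpowers (QuotientGroup.mk' H (g i))) = (⊤ : Subgroup (G ⧸ H)) := by
  have : Fact p.Prime := ⟨hp⟩
  obtain ⟨y, rfl⟩ := H.isCyclic_iff_exists_zpowers_eq_top.1 (isCyclic_of_prime_card hH)
  have hy : orderOf y = p := (Nat.card_zpowers y).symm.trans hH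
  obtain ⟨ι, _, g, j, hg, hcard, hyj⟩ := hG.exists_isCyclicBasis_mem_zpowers
    (hy ▸ pow_orderOf_eq_one y) fun h1 => hp.ne_one (by rw [← hy, h1, orderOf_one])
  let σ : Fin t ≃ ι := (Fintype.equivFinOfCardEq (hcard.trans hrank)).symm
  have hgσ := hg.comp_equiv σ
  have hq := hgσ.map_mk' (j := σ.symm j) (zpowers_le.2 (by simpa using hyj))
  exact ⟨g ∘ σ, hgσ.1, hgσ.2, hq.1, hq.2⟩

/-- Statement (6.2): Let `G` be a finite abelian `p`-group of rank `t ≥ 1`, `H` a subgroup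
of `G` of order `p`, and `π : G → G/H` the natural projection.  Then there exist elements
`g₁, …, g_t` of `G` such that the internal product of the cyclic subgroups `⟨gᵢ⟩` is direct
and equal to `G`, and the internal product of the cyclic subgroups `⟨π gᵢ⟩` is direct and
equal to `G/H`. -/
theorem abelian_pGroup_basis_adapted_to_quotient
    (p : ℕ) (hp : p.Prime) (G : Type*) [CommGroup G] [Finite G]
    (hG : IsPGroup p G) (t : ℕ) (ht : 1 ≤ t) (hrank : Group.rank G = t)
    (H : Subgroup G) (hH : Nat.card H = p) :
    ∃ g : Fin t → G,
      iSupIndep (fun i => Subgroup.zpowers (g i)) ∧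
      (⨆ i, Subgroup.zpowers (g i)) = ⊤ ∧
      iSupIndep (fun i => Subgroup.zpowers (QuotientGroup.mk' H (g i))) ∧
      (⨆ i, Subgroup.zpowers (QuotientGroup.mk' H (g i))) = (⊤ : Subgroup (G ⧸ H)) :=
  abelian_pGroup_basis_adapted_to_quotient_general p hp G hG t hrank H hH
end

section
/- Let E be a field, M/E a finite abelian Galois extension with M ≠ E, Π the set of prime divisors of [M:E], and for each p ∈ Π let M_p be the intersection of M with the maximal p-extension of E (equivalently, the fixed field of the p'-Hall subgroup of Gal(M/E)). Then M is the compositum of the fields M_p for p ∈ Π, the norm group N(M/E) equals the intersection ⋂_{p∈Π} N(M_p/E), and E*/N(M/E) is isomorphic to the direct product ∏_{p∈Π} E*/N(M_p/E). -/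
/-!
Let `H_p` be the Hall subgroup with fixed field `M_p`. Then `[M : M_p] = |H_p|` is prime to `p`,
so a number dividing `[M : E]` and every `[M : M_p]` must be `1`. Applied to `[M : ⨆ M_p]` this
gives the compositum; applied to the order of `u ∈ ⋂ N(M_p/E)` modulo `N(M/E)`, using
`N(M_p/E)^[M : M_p] ⊆ N(M/E)` and `(E*)^[M : E] ⊆ N(M/E)`, it gives the norm group. Finally
`(E*)^[M_p : E] ⊆ N(M_p/E)` and the degrees `[M_p : E] = [G : H_p]` are powers of distinct primes,
so the Chinese remainder theorem makes `E* → ∏ E*/N(M_p/E)` surjective.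
-/

noncomputable def normGroup {E M : Type*} [Field E] [Field M] [Algebra E M]
    (L : IntermediateField E M) : Subgroup Eˣ :=
  (Units.map (Algebra.norm E : L →* E)).range

noncomputable def normGroupTop (E M : Type*) [Field E] [Field M] [Algebra E M] :
    Subgroup Eˣ :=
  (Units.map (Algebra.norm E : M →* E)).range

open Function Module IntermediateField

theorem Nat.eq_one_of_dvd_of_forall_prime_exists_not_dvd {d n : ℕ} (hd : d ∣ n)
    (h : ∀ p, p.Prime → p ∣ n → ∃ k, ¬ p ∣ k ∧ d ∣ k) : d = 1 := by
  by_contra hd1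
  obtain ⟨p, hp, hpd⟩ := Nat.exists_prime_and_dvd hd1
  obtain ⟨k, hpk, hdk⟩ := h p hp (hpd.trans hd)
  exact hpk (hpd.trans hdk)

section CommGroup

variable {G : Type*} [CommGroup G]

theorem Subgroup.mem_of_pow_mem_of_forall_prime_exists_not_dvd {N : Subgroup G} {g : G} {n : ℕ}
    (hn : g ^ n ∈ N) (h : ∀ p, p.Prime → p ∣ n → ∃ k, ¬ p ∣ k ∧ g ^ k ∈ N) : g ∈ N := by
  have hdvd : ∀ {k : ℕ}, g ^ k ∈ N → orderOf (g : G ⧸ N) ∣ k := fun hk =>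
    orderOf_dvd_of_pow_eq_one <| by rwa [← QuotientGroup.mk_pow, QuotientGroup.eq_one_iff]
  have hord : orderOf (g : G ⧸ N) = 1 :=
    Nat.eq_one_of_dvd_of_forall_prime_exists_not_dvd (hdvd hn) fun p hp hpn =>
      let ⟨k, hpk, hk⟩ := h p hp hpn
      ⟨k, hpk, hdvd hk⟩
  rwa [orderOf_eq_one_iff, QuotientGroup.eq_one_iff] at hord

variable {ι : Type*} {N : ι → Subgroup G} {n : ι → ℕ}

theorem QuotientGroup.zpow_eq_one_of_dvd (hpow : ∀ i (g : G), g ^ n i ∈ N i) {i : ι}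
    (z : G ⧸ N i) {k : ℤ} (hk : (n i : ℤ) ∣ k) : z ^ k = 1 := by
  obtain ⟨c, rfl⟩ := hk
  induction z using QuotientGroup.induction_on with
  | H g => rw [zpow_mul, zpow_natCast, ← QuotientGroup.mk_pow,
      (QuotientGroup.eq_one_iff _).mpr (hpow i g), one_zpow]

theorem QuotientGroup.pi_mk_surjective_of_pairwise_coprime [Finite ι]
    (hn : Pairwise (Nat.Coprime on n)) (hpow : ∀ i (g : G), g ^ n i ∈ N i) :
    Function.Surjective (MonoidHom.pi fun i => QuotientGroup.mk' (N i)) := by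
  classical
  have := Fintype.ofFinite ι
  have hidempotent : ∀ i, ∃ e : ℤ, (n i : ℤ) ∣ e - 1 ∧ ∀ j, i ≠ j → (n j : ℤ) ∣ e := by
    intro i
    obtain ⟨x, y, hxy⟩ : IsCoprime (n i : ℤ) (∏ j ∈ Finset.univ.erase i, (n j : ℤ)) :=
      IsCoprime.prod_right fun j hj =>
        Nat.isCoprime_iff_coprime.mpr (hn (Finset.ne_of_mem_erase hj).symm)
    refine ⟨y * ∏ j ∈ Finset.univ.erase i, (n j : ℤ), ⟨-x, by linear_combination hxy⟩,
      fun j hj => (Finset.dvd_prod_of_mem _ ?_).mul_left _⟩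
    exact Finset.mem_erase.mpr ⟨hj.symm, Finset.mem_univ j⟩
  choose e he_one he_zero using hidempotent
  intro f
  choose a ha using fun i => QuotientGroup.mk'_surjective (N i) (f i)
  refine ⟨∏ i, a i ^ e i, funext fun j => ?_⟩
  calc QuotientGroup.mk' (N j) (∏ i, a i ^ e i)
      = ∏ i, QuotientGroup.mk' (N j) (a i) ^ e i := by simp only [map_prod, map_zpow]
    _ = QuotientGroup.mk' (N j) (a j) ^ e j :=
      Finset.prod_eq_single j (fun i _ hij => zpow_eq_one_of_dvd hpow _ (he_zero i j hij))
        (by simp)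
    _ = QuotientGroup.mk' (N j) (a j) ^ (e j - 1) * QuotientGroup.mk' (N j) (a j) := by
      rw [← zpow_add_one, sub_add_cancel]
    _ = f j := by rw [zpow_eq_one_of_dvd hpow _ (he_one j), one_mul, ha]

noncomputable def QuotientGroup.quotientIInfMulEquivPiOfPairwiseCoprime [Finite ι]
    (hn : Pairwise (Nat.Coprime on n)) (hpow : ∀ i (g : G), g ^ n i ∈ N i) :
    G ⧸ (⨅ i, N i) ≃* ∀ i, G ⧸ N i :=
  have hker : (MonoidHom.pi fun i => QuotientGroup.mk' (N i)).ker = ⨅ i, N i := by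
    ext g
    simp [funext_iff]
  (QuotientGroup.quotientMulEquivOfEq hker.symm).trans
    (QuotientGroup.quotientKerEquivOfSurjective _ (pi_mk_surjective_of_pairwise_coprime hn hpow))

end CommGroup

section NormGroup

variable {E M : Type*} [Field E] [Field M] [Algebra E M]

theorem normGroupTop_le_normGroup (L : IntermediateField E M) :
    normGroupTop E M ≤ normGroup L := by
  rintro _ ⟨v, rfl⟩
  refine ⟨Units.map (Algebra.norm L : M →* L) v, Units.ext ?_⟩
  exact Algebra.norm_norm (R := E) (S := L) (a := (v : M))

theorem pow_finrank_mem_normGroup (L : IntermediateField E M) (u : Eˣ) :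
    u ^ finrank E L ∈ normGroup L :=
  ⟨Units.map (algebraMap E L : E →* L) u, Units.ext (Algebra.norm_algebraMap (S := L) (u : E))⟩

theorem pow_finrank_mem_normGroupTop (u : Eˣ) : u ^ finrank E M ∈ normGroupTop E M :=
  ⟨Units.map (algebraMap E M : E →* M) u, Units.ext (Algebra.norm_algebraMap (S := M) (u : E))⟩

theorem pow_finrank_mem_normGroupTop_of_mem_normGroup {L : IntermediateField E M} {u : Eˣ}
    (hu : u ∈ normGroup L) : u ^ finrank L M ∈ normGroupTop E M := by
  obtain ⟨v, rfl⟩ := hu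
  refine ⟨Units.map (algebraMap L M : L →* M) v, Units.ext ?_⟩
  simp only [Units.coe_map, MonoidHom.coe_coe, Units.val_pow_eq_pow_val]
  rw [← Algebra.norm_norm (S := L), Algebra.norm_algebraMap, map_pow]

variable {ι : Type*} (L : ι → IntermediateField E M)

theorem iSup_eq_top_of_forall_prime_exists_not_dvd_finrank
    (hcover : ∀ p, p.Prime → p ∣ finrank E M → ∃ i, ¬ p ∣ finrank (L i) M) :
    ⨆ i, L i = ⊤ := by
  rw [← finrank_eq_one_iff_eq_top]
  refine Nat.eq_one_of_dvd_of_forall_prime_exists_not_dvd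
    (finrank_bot' (F := E) (E := M) ▸ finrank_dvd_of_le_left (bot_le (a := ⨆ i, L i)))
    fun p hp hpn => ?_
  obtain ⟨i, hi⟩ := hcover p hp hpn
  exact ⟨_, hi, finrank_dvd_of_le_left (le_iSup L i)⟩

theorem normGroupTop_eq_iInf_normGroup_of_forall_prime_exists_not_dvd_finrank
    (hcover : ∀ p, p.Prime → p ∣ finrank E M → ∃ i, ¬ p ∣ finrank (L i) M) :
    normGroupTop E M = ⨅ i, normGroup (L i) := by
  refine le_antisymm (le_iInf fun i => normGroupTop_le_normGroup (L i)) fun u hu => ?_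
  refine Subgroup.mem_of_pow_mem_of_forall_prime_exists_not_dvd
    (pow_finrank_mem_normGroupTop u) fun p hp hpn => ?_
  obtain ⟨i, hi⟩ := hcover p hp hpn
  exact ⟨_, hi, pow_finrank_mem_normGroupTop_of_mem_normGroup (Subgroup.mem_iInf.mp hu i)⟩

end NormGroup

theorem abelian_ext_decomposes_into_primary_parts_general
    (E M : Type*) [Field E] [Field M] [Algebra E M] [FiniteDimensional E M]
    [IsGalois E M]
    (Mp : {q : ℕ // q.Prime ∧ q ∣ Module.finrank E M} → IntermediateField E M)
    (hMp : ∀ q : {q : ℕ // q.Prime ∧ q ∣ Module.finrank E M}, ∃ H : Subgroup (M ≃ₐ[E] M),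
      (¬ (q : ℕ) ∣ Nat.card H) ∧ (∃ k : ℕ, H.index = (q : ℕ) ^ k) ∧
      Mp q = IntermediateField.fixedField H) :
    (⨆ q, Mp q) = ⊤ ∧
    normGroupTop E M = ⨅ q, normGroup (Mp q) ∧
    Nonempty ((Eˣ ⧸ normGroupTop E M) ≃*
      ∀ q : {q : ℕ // q.Prime ∧ q ∣ Module.finrank E M}, Eˣ ⧸ normGroup (Mp q)) := by
  choose H hH_card hH_index hMpH using hMp
  have hcover : ∀ p, p.Prime → p ∣ finrank E M → ∃ q, ¬ p ∣ finrank (Mp q) M :=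
    fun p hp hpn => ⟨⟨p, hp, hpn⟩, by rw [hMpH, finrank_fixedField_eq_card]; exact hH_card _⟩
  have hcoprime : Pairwise (Nat.Coprime on fun q => finrank E (Mp q)) := by
    intro q r hqr
    obtain ⟨k, hk⟩ := hH_index q
    obtain ⟨l, hl⟩ := hH_index r
    simp only [onFun, hMpH, finrank_eq_fixingSubgroup_index, fixingSubgroup_fixedField,
      hk, hl]
    exact .pow _ _ ((Nat.coprime_primes q.2.1 r.2.1).mpr (Subtype.coe_injective.ne hqr))
  have : Finite {q : ℕ // q.Prime ∧ q ∣ finrank E M} :=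
    ((Set.finite_Iic (finrank E M)).subset fun q hq => Nat.le_of_dvd finrank_pos hq.2).to_subtype
  have hnorm := normGroupTop_eq_iInf_normGroup_of_forall_prime_exists_not_dvd_finrank Mp hcover
  refine ⟨iSup_eq_top_of_forall_prime_exists_not_dvd_finrank Mp hcover, hnorm, ⟨?_⟩⟩
  exact (QuotientGroup.quotientMulEquivOfEq hnorm).trans
    (QuotientGroup.quotientIInfMulEquivPiOfPairwiseCoprime hcoprime
      fun q => pow_finrank_mem_normGroup (Mp q))

/-- Lemma 2.1: let `M/E` be a finite abelian extension with `M ≠ E`, `Π` the set of prime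
divisors of `[M:E]`, and for each `p ∈ Π` let `M_p = M ∩ E(p)` be the fixed field of a
`p'`-Hall subgroup of `Gal(M/E)`.  Then `M` is the compositum of the `M_p`,
`N(M/E) = ⋂_{p∈Π} N(M_p/E)`, and `E*/N(M/E) ≅ ∏_{p∈Π} E*/N(M_p/E)`. -/
theorem abelian_ext_decomposes_into_primary_parts
    (E M : Type*) [Field E] [Field M] [Algebra E M] [FiniteDimensional E M]
    [IsGalois E M] (hab : ∀ σ τ : M ≃ₐ[E] M, σ * τ = τ * σ)
    (hne : Module.finrank E M ≠ 1)
    (Mp : {q : ℕ // q.Prime ∧ q ∣ Module.finrank E M} → IntermediateField E M)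
    (hMp : ∀ q : {q : ℕ // q.Prime ∧ q ∣ Module.finrank E M}, ∃ H : Subgroup (M ≃ₐ[E] M),
      (¬ (q : ℕ) ∣ Nat.card H) ∧ (∃ k : ℕ, H.index = (q : ℕ) ^ k) ∧
      Mp q = IntermediateField.fixedField H) :
    (⨆ q, Mp q) = ⊤ ∧
    normGroupTop E M = ⨅ q, normGroup (Mp q) ∧
    Nonempty ((Eˣ ⧸ normGroupTop E M) ≃*
      ∀ q : {q : ℕ // q.Prime ∧ q ∣ Module.finrank E M}, Eˣ ⧸ normGroup (Mp q)) :=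
  abelian_ext_decomposes_into_primary_parts_general E M Mp hMp
end
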